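/- arXiv:2310.15668 — 7 statements merged into one kernel-verified Lean document; each statement's English description precedes it below -/
import Mathlib

section
/- Let E be a finite set with |E| ≥ 1 and let I_1, …, I_M be pairwise-distinct 3-element subsets of E. Let X_1, …, X_s (s ≥ 1) be independent random variables, each uniformly distributed on E, and define M̄ := (|E|/(3s)) · Σ_{i=1}^{s} Σ_{j=1}^{M} 1[X_i ∈ I_j]. For l ∈ {0,1,2}, let p_l be the number of ordered pairs (j, j') with j ≠ j' and |I_j ∩ I_{j'}| = l. Then Var[M̄] = (1/(3s)) · M · (|E| − 3) + (1/(9s)) · Σ_{l=0}^{2} p_l · (l·|E| − 9). (Theorem 2, variance of MoCHy-A.) -/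
/-!
Write `d a` for the number of instances containing the hyperedge `a`. The estimator is
`|E|/(3s) · Σᵢ d (Xᵢ)`, a scaled sum of `s` i.i.d. copies of `d X` with `X` uniform on `E`, so its
variance is `|E|²/(9s) · Var (d X)`: after centring `d` at its mean the cross terms
`E[d(Xᵢ) d(Xᵢ')]`, `i ≠ i'`, vanish. Double counting gives `Σₐ d a = Σⱼ |Iⱼ| = 3M` and
`Σₐ (d a)² = Σ_{j,j'} |Iⱼ ∩ Iⱼ'|`; the diagonal pairs contribute `3` each, and the distinct pairs,
which meet in fewer than `3` hyperedges, are grouped by the size `l` of their intersection.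
-/

open Finset

-- also for `k = 0`, where `k - 1` truncates to `0`
theorem natCast_mul_pow_sub_one {K : Type*} [DivisionRing K] {x : K} (hx : x ≠ 0) (k : ℕ) :
    (k : K) * x ^ (k - 1) = k * x ^ k / x := by
  cases k with
  | zero => simp
  | succ k => simp [pow_succ, mul_div_assoc, hx]

section UniformSamples

variable {ι α : Type*} [Fintype ι] [DecidableEq ι] [Fintype α]

theorem Fintype.sum_pi_comp_eval {R : Type*} [AddCommMonoid R] (φ : α → R) (i : ι) :
    ∑ x : ι → α, φ (x i) = Fintype.card α ^ (Fintype.card ι - 1) • ∑ a, φ a := by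
  rw [← (Equiv.funSplitAt i α).symm.sum_comp, Fintype.sum_prod_type]
  simp [Fintype.card_subtype_compl, Finset.smul_sum]

theorem Fintype.sum_pi_eval_mul_eval_eq_zero {R : Type*} [NonUnitalNonAssocSemiring R]
    {g : α → R} (hg : ∑ a, g a = 0) (h : α → R) {i j : ι} (hij : i ≠ j) :
    ∑ x : ι → α, g (x i) * h (x j) = 0 := by
  rw [← (Equiv.funSplitAt i α).symm.sum_comp, Fintype.sum_prod_type]
  simp [hij.symm, ← Finset.sum_mul_sum, hg]

theorem Fintype.sum_pi_sq_sum_eval_of_sum_eq_zero {R : Type*} [CommSemiring R]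
    {g : α → R} (hg : ∑ a, g a = 0) :
    ∑ x : ι → α, (∑ i, g (x i)) ^ 2
      = Fintype.card ι * Fintype.card α ^ (Fintype.card ι - 1) * ∑ a, g a ^ 2 := by
  have diagonal (i : ι) : ∑ j, ∑ x : ι → α, g (x i) * g (x j) = ∑ x : ι → α, g (x i) ^ 2 := by
    rw [Finset.sum_eq_single i (fun j _ hji => sum_pi_eval_mul_eval_eq_zero hg g hji.symm)
      (by simp)]
    simp only [sq]
  calc ∑ x : ι → α, (∑ i, g (x i)) ^ 2
      = ∑ i, ∑ j, ∑ x : ι → α, g (x i) * g (x j) := by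
        simp_rw [sq, Finset.sum_mul_sum]
        rw [Finset.sum_comm]
        exact Finset.sum_congr rfl fun i _ => Finset.sum_comm
    _ = Fintype.card ι * Fintype.card α ^ (Fintype.card ι - 1) * ∑ a, g a ^ 2 := by
        simp only [diagonal, sum_pi_comp_eval (fun a => g a ^ 2), Finset.sum_const,
          Finset.card_univ, nsmul_eq_mul, Nat.cast_pow, mul_assoc]

theorem Fintype.sum_pi_sum_eval_div [Nonempty α] (f : α → ℝ) :
    (∑ x : ι → α, ∑ i, f (x i)) / (Fintype.card α : ℝ) ^ Fintype.card ι
      = Fintype.card ι * (∑ a, f a) / Fintype.card α := by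
  have hα : (Fintype.card α : ℝ) ≠ 0 := by positivity
  rw [Finset.sum_comm]
  simp only [sum_pi_comp_eval, Finset.sum_const, Finset.card_univ, nsmul_eq_mul, Nat.cast_pow,
    ← mul_assoc, natCast_mul_pow_sub_one hα]
  field_simp

theorem Fintype.sum_sq_sub_mean_mul_sum_eval [Nonempty α] (c : ℝ) (f : α → ℝ) :
    (∑ x : ι → α, (c * ∑ i, f (x i)
        - (∑ y : ι → α, c * ∑ i, f (y i)) / (Fintype.card α : ℝ) ^ Fintype.card ι) ^ 2)
        / (Fintype.card α : ℝ) ^ Fintype.card ι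
      = c ^ 2 * Fintype.card ι
          * (Fintype.card α * ∑ a, f a ^ 2 - (∑ a, f a) ^ 2) / (Fintype.card α : ℝ) ^ 2 := by
  have hN : (Fintype.card α : ℝ) ≠ 0 := by positivity
  set m := (∑ a, f a) / Fintype.card α with hm
  have hcentered : ∑ a, (f a - m) = 0 := by
    rw [Finset.sum_sub_distrib, Finset.sum_const, Finset.card_univ, nsmul_eq_mul, hm,
      mul_div_cancel₀ _ hN, sub_self]
  have hmean : (∑ y : ι → α, c * ∑ i, f (y i)) / (Fintype.card α : ℝ) ^ Fintype.card ι
      = c * ∑ _i : ι, m := by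
    rw [← Finset.mul_sum, mul_div_assoc, sum_pi_sum_eval_div]
    simp [m, mul_div_assoc]
  have hdev (x : ι → α) : c * ∑ i, f (x i) - c * ∑ _i : ι, m = c * ∑ i, (f (x i) - m) := by
    rw [Finset.sum_sub_distrib, mul_sub]
  have hvar : Fintype.card α * ∑ a, (f a - m) ^ 2
      = Fintype.card α * ∑ a, f a ^ 2 - (∑ a, f a) ^ 2 := by
    simp only [sub_sq, Finset.sum_add_distrib, Finset.sum_sub_distrib, ← Finset.sum_mul,
      ← Finset.mul_sum, Finset.sum_const, Finset.card_univ, nsmul_eq_mul, hm]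
    field_simp
    ring
  rw [hmean]
  simp only [hdev, mul_pow, ← Finset.mul_sum, sum_pi_sq_sum_eval_of_sum_eq_zero hcentered]
  rw [← hvar, ← mul_assoc (c ^ 2), natCast_mul_pow_sub_one hN]
  field_simp

end UniformSamples

section FiniteFamilies

variable {κ α : Type*} [Fintype κ] [DecidableEq α]

def coverCount (S : κ → Finset α) (a : α) : ℕ := #{j | a ∈ S j}

theorem natCast_coverCount {R : Type*} [AddCommMonoidWithOne R] (S : κ → Finset α) (a : α) :
    (coverCount S a : R) = ∑ j, if a ∈ S j then 1 else 0 := by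
  simp [coverCount, Finset.sum_boole]

theorem sum_coverCount [Fintype α] (S : κ → Finset α) : ∑ a, coverCount S a = ∑ j, #(S j) := by
  simp only [coverCount, Finset.card_eq_sum_ones, Finset.sum_filter]
  rw [Finset.sum_comm]
  simp

theorem coverCount_sq (S : κ → Finset α) (a : α) :
    coverCount S a ^ 2 = coverCount (fun q : κ × κ => S q.1 ∩ S q.2) a := by
  rw [coverCount, coverCount, sq, ← Finset.card_product]
  congr 1
  ext q
  simp

theorem card_mul_sum_coverCount_sq_sub_sq [Fintype α] (S : κ → Finset α) :
    (Fintype.card α : ℝ) * ∑ a, (coverCount S a : ℝ) ^ 2 - (∑ a, (coverCount S a : ℝ)) ^ 2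
      = ∑ q : κ × κ, ((Fintype.card α : ℝ) * #(S q.1 ∩ S q.2) - #(S q.1) * #(S q.2)) := by
  simp_rw [← Nat.cast_pow, ← Nat.cast_sum, coverCount_sq, sum_coverCount]
  push_cast
  rw [sq, Finset.sum_mul_sum, ← Finset.sum_product', Finset.univ_product_univ, Finset.mul_sum,
    ← Finset.sum_sub_distrib]

theorem Finset.card_inter_lt_of_card_eq {s t : Finset α} {k : ℕ} (hs : #s = k) (ht : #t = k)
    (hst : s ≠ t) : #(s ∩ t) < k :=
  hs ▸ card_lt_card (ssubset_of_subset_of_ne inter_subset_left fun h =>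
    hst (eq_of_subset_of_card_le (inter_eq_left.mp h) (by rw [hs, ht])))

theorem sum_comp_card_inter_of_card_eq {S : κ → Finset α} {k : ℕ} (hS : ∀ j, #(S j) = k)
    (hinj : Function.Injective S) (φ : ℕ → ℝ) :
    ∑ q : κ × κ, φ #(S q.1 ∩ S q.2)
      = Fintype.card κ * φ k
        + ∑ l ∈ range k, Nat.card {q : κ × κ // q.1 ≠ q.2 ∧ #(S q.1 ∩ S q.2) = l} * φ l := by
  classical
  have hlt : ∀ q ∈ (univ : Finset κ).offDiag, #(S q.1 ∩ S q.2) ∈ range k := fun q hq =>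
    mem_range.mpr <| card_inter_lt_of_card_eq (hS _) (hS _) (hinj.ne (mem_offDiag.mp hq).2.2)
  have hfiber (l : ℕ) : ∑ q ∈ (univ : Finset κ).offDiag with #(S q.1 ∩ S q.2) = l,
      φ #(S q.1 ∩ S q.2)
        = Nat.card {q : κ × κ // q.1 ≠ q.2 ∧ #(S q.1 ∩ S q.2) = l} * φ l := by
    rw [sum_congr rfl fun q hq => by rw [(mem_filter.mp hq).2], sum_const, nsmul_eq_mul,
      Nat.card_eq_fintype_card, Fintype.card_subtype]
    congr 3
    ext q
    simp
  rw [← univ_product_univ, ← diag_union_offDiag, sum_union (disjoint_diag_offDiag _), sum_diag,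
    ← sum_fiberwise_of_maps_to hlt]
  simp [hS, hfiber]

end FiniteFamilies

theorem mochyA_variance_general {α : Type*} [Fintype α] [DecidableEq α] [Nonempty α]
    {M s : ℕ} (I : Fin M → Finset α)
    (hcard : ∀ j, (I j).card = 3) (hdist : Function.Injective I)
    (est : (Fin s → α) → ℝ)
    (hest : ∀ x, est x = ((Fintype.card α : ℝ) / (3 * s)) *
        ∑ i : Fin s, ∑ j : Fin M, (if x i ∈ I j then (1 : ℝ) else 0))
    (μ : ℝ) (hμ : μ = (∑ x : Fin s → α, est x) / (Fintype.card α : ℝ) ^ s)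
    (p : ℕ → ℕ)
    (hp : ∀ l, p l =
      Nat.card {jj : Fin M × Fin M // jj.1 ≠ jj.2 ∧ (I jj.1 ∩ I jj.2).card = l}) :
    (∑ x : Fin s → α, (est x - μ) ^ 2) / (Fintype.card α : ℝ) ^ s
      = 1 / (3 * s) * M * ((Fintype.card α : ℝ) - 3)
        + 1 / (9 * s) *
            ∑ l ∈ Finset.range 3, (p l : ℝ) * (l * (Fintype.card α : ℝ) - 9) := by
  obtain rfl : est = fun x => (Fintype.card α : ℝ) / (3 * s) * ∑ i, (coverCount I (x i) : ℝ) :=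
    funext fun x => by simp only [hest, natCast_coverCount]
  subst hμ
  have hvar := Fintype.sum_sq_sub_mean_mul_sum_eval (ι := Fin s)
    ((Fintype.card α : ℝ) / (3 * s)) (fun a => (coverCount I a : ℝ))
  simp only [Fintype.card_fin] at hvar
  rw [hvar, card_mul_sum_coverCount_sq_sub_sq]
  simp only [hcard, Nat.cast_ofNat]
  rw [sum_comp_card_inter_of_card_eq hcard hdist fun l => Fintype.card α * (l : ℝ) - 3 * 3]
  simp only [← hp, Fintype.card_fin]
  push_cast
  field_simp
  ring_nf

/-- **Theorem 2 (variance of MoCHy-A).**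
`α` is the finite hyperedge set `E` (with `|E| ≥ 1`), `I 1, …, I M` are the
pairwise-distinct 3-element subsets of `E` (the instances of a fixed h-motif).
`est` is the estimator `M̄ = (|E|/(3s)) · Σᵢ Σⱼ 1[Xᵢ ∈ Iⱼ]`, where the `s ≥ 1`
i.i.d. uniform samples are encoded by the uniform distribution on `Fin s → α`;
`μ = E[M̄]` and `p l` is the number of ordered pairs `(j, j')` with `j ≠ j'`
and `|Iⱼ ∩ Iⱼ'| = l`.  Then
`Var[M̄] = (1/(3s))·M·(|E| − 3) + (1/(9s))·Σ_{l=0}^{2} p_l·(l·|E| − 9)`. -/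
theorem mochyA_variance {α : Type*} [Fintype α] [DecidableEq α] [Nonempty α]
    {M s : ℕ} (hs : 1 ≤ s) (I : Fin M → Finset α)
    (hcard : ∀ j, (I j).card = 3) (hdist : Function.Injective I)
    (est : (Fin s → α) → ℝ)
    (hest : ∀ x, est x = ((Fintype.card α : ℝ) / (3 * s)) *
        ∑ i : Fin s, ∑ j : Fin M, (if x i ∈ I j then (1 : ℝ) else 0))
    (μ : ℝ) (hμ : μ = (∑ x : Fin s → α, est x) / (Fintype.card α : ℝ) ^ s)
    (p : ℕ → ℕ)
    (hp : ∀ l, p l =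
      Nat.card {jj : Fin M × Fin M // jj.1 ≠ jj.2 ∧ (I jj.1 ∩ I jj.2).card = l}) :
    (∑ x : Fin s → α, (est x - μ) ^ 2) / (Fintype.card α : ℝ) ^ s
      = 1 / (3 * s) * M * ((Fintype.card α : ℝ) - 3)
        + 1 / (9 * s) *
            ∑ l ∈ Finset.range 3, (p l : ℝ) * (l * (Fintype.card α : ℝ) - 9) :=
  mochyA_variance_general I hcard hdist est hest μ hμ p hp
end

section
/- Let E be a finite set with |E| ≥ 1 and let I_1, …, I_M be pairwise-distinct 3-element subsets of E with M ≥ 1. Suppose every element of E belongs to at most D of the sets I_1, …, I_M (D ≥ 1). Let X_1, …, X_s be independent uniform samples from E and M̄ := (|E|/(3s)) · Σ_{i=1}^{s} Σ_{j=1}^{M} 1[X_i ∈ I_j]. Then for any ε, δ > 0, if s > (1/(18ε²)) · (|E|·D/M)² · log(2/δ), then Pr(|M̄ − M| ≥ M·ε) ≤ δ. (Theorem 4, concentration bound of MoCHy-A; the paper instantiates D = d_max[t]², where d_max[t] is the maximum number of adjacent hyperedges over all hyperedges occurring in instances of h-motif t.) -/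
/-!
Let `f a` be the number of the sets `I j` containing `a`. Then `M̄ = |E| / (3s) · ∑ᵢ f (Xᵢ)`, and
by double counting `∑ₐ f a = 3M`, so each `f (Xᵢ)` has mean `3M / |E|`. The event
`|M̄ - M| ≥ Mε` is therefore the event `|∑ᵢ (f (Xᵢ) - 3M / |E|)| ≥ 3sMε / |E|`. The summands are
independent, centred and range over an interval of length `D`, so Hoeffding's inequality bounds
its probability by `2 exp (-18 s M² ε² / (|E| D)²)`, which is at most `δ` for the given `s`.
-/

open scoped Classical

open MeasureTheory ProbabilityTheory Real Finset
open scoped NNReal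

namespace ProbabilityTheory

lemma HasSubgaussianMGF.measure_abs_sum_ge_le_of_iIndepFun {Ω ι : Type*}
    {mΩ : MeasurableSpace Ω} {μ : Measure Ω} [IsFiniteMeasure μ] {X : ι → Ω → ℝ}
    (h_indep : iIndepFun X μ) {c : ι → ℝ≥0} {s : Finset ι} (h_subG : ∀ i ∈ s, HasSubgaussianMGF (X i) (c i) μ)
    {ε : ℝ} (hε : 0 ≤ ε) :
    μ.real {ω | ε ≤ |∑ i ∈ s, X i ω|} ≤ 2 * exp (-ε ^ 2 / (2 * ∑ i ∈ s, c i)) := by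
  have h_upper := HasSubgaussianMGF.measure_sum_ge_le_of_iIndepFun h_indep h_subG hε
  have h_lower := HasSubgaussianMGF.measure_sum_ge_le_of_iIndepFun
    (h_indep.comp (fun _ ↦ Neg.neg) fun _ ↦ measurable_neg) (fun i hi ↦ (h_subG i hi).neg) hε
  calc μ.real {ω | ε ≤ |∑ i ∈ s, X i ω|}
      ≤ μ.real ({ω | ε ≤ ∑ i ∈ s, X i ω} ∪ {ω | ε ≤ ∑ i ∈ s, (Neg.neg ∘ X i) ω}) := by
        refine measureReal_mono fun ω hω ↦ ?_
        simpa only [Set.mem_union, Set.mem_ofPred_eq, Function.comp_apply, sum_neg_distrib]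
          using le_abs.mp hω
    _ ≤ _ := (measureReal_union_le _ _).trans (by linarith)

section UniformSampling

variable {α : Type*} [Fintype α] [MeasurableSpace α] [MeasurableSingletonClass α]

lemma integral_uniformOn_univ (g : α → ℝ) :
    ∫ a, g a ∂uniformOn Set.univ = (∑ a, g a) / Fintype.card α := by
  rw [integral_fintype .of_finite]
  simp [uniformOn_univ, measureReal_def, div_eq_inv_mul, mul_sum]

lemma measureReal_uniformOn_univ_finset (S : Finset α) :
    (uniformOn Set.univ).real (S : Set α) = #S / Fintype.card α := by
  simp [measureReal_def, uniformOn_univ, ENNReal.toReal_div]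

lemma measureReal_uniformOn_abs_sum_sub_ge_le [Nonempty α] (s : ℕ) (g : α → ℝ) {a b : ℝ}
    (hg : ∀ y, g y ∈ Set.Icc a b) {t : ℝ} (ht : 0 ≤ t) :
    (uniformOn (Set.univ : Set (Fin s → α))).real
        {x | t ≤ |∑ i, (g (x i) - (∑ y, g y) / Fintype.card α)|}
      ≤ 2 * exp (-2 * t ^ 2 / (s * (b - a) ^ 2)) := by
  set P : Measure α := uniformOn Set.univ
  have h_indep : iIndepFun (fun i (x : Fin s → α) ↦ g (x i) - P[g]) (Measure.pi fun _ ↦ P) :=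
    iIndepFun_pi (X := fun _ y ↦ g y - P[g]) fun _ ↦ (measurable_of_finite _).aemeasurable
  have h_subG (i : Fin s) : HasSubgaussianMGF (fun x : Fin s → α ↦ g (x i) - P[g])
      ((‖b - a‖₊ / 2) ^ 2) (Measure.pi fun _ ↦ P) := by
    refine HasSubgaussianMGF.of_map (X := fun y ↦ g y - P[g]) (Y := fun x : Fin s → α ↦ x i)
      (measurable_pi_apply i).aemeasurable ?_
    rw [(measurePreserving_eval _ i).map_eq]
    exact hasSubgaussianMGF_of_mem_Icc (measurable_of_finite _).aemeasurable (ae_of_all _ hg)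
  have h := HasSubgaussianMGF.measure_abs_sum_ge_le_of_iIndepFun h_indep (s := univ)
    (fun i _ ↦ h_subG i) ht
  rw [← Set.pi_univ, uniformOn_pi, ← integral_uniformOn_univ]
  refine h.trans_eq ?_
  congr 2
  push_cast
  rw [sum_const, card_univ, Fintype.card_fin, nsmul_eq_mul, Real.norm_eq_abs, div_pow, sq_abs,
    show (2 : ℝ) * (s * ((b - a) ^ 2 / 2 ^ 2)) = s * (b - a) ^ 2 / 2 by ring,
    div_div_eq_mul_div]
  ring

end UniformSampling

end ProbabilityTheory

lemma card_filter_abs_sum_sub_ge_le {α : Type*} [Fintype α] [Nonempty α] (s : ℕ) (g : α → ℝ)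
    {a b : ℝ} (hg : ∀ y, g y ∈ Set.Icc a b) {t : ℝ} (ht : 0 ≤ t) :
    (#{x : Fin s → α | t ≤ |∑ i, (g (x i) - (∑ y, g y) / Fintype.card α)|} : ℝ)
        / (Fintype.card α : ℝ) ^ s
      ≤ 2 * exp (-2 * t ^ 2 / (s * (b - a) ^ 2)) := by
  let : MeasurableSpace α := ⊤
  have h := measureReal_uniformOn_abs_sum_sub_ge_le s g hg ht
  rwa [← coe_filter_univ, measureReal_uniformOn_univ_finset, Fintype.card_fun, Fintype.card_fin,
    Nat.cast_pow] at h

lemma two_mul_exp_neg_div_le {C s δ : ℝ} (hC : 0 < C) (hδ : 0 < δ) (hs : C * log (2 / δ) < s) :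
    2 * exp (-(s / C)) ≤ δ :=
  calc 2 * exp (-(s / C)) ≤ 2 * exp (-log (2 / δ)) := by
        gcongr
        exact (le_div_iff₀ hC).mpr (by linarith)
    _ = δ := by rw [exp_neg, exp_log (by positivity), inv_div]; ring

theorem mochyA_concentration_general {α : Type*} [Fintype α] [DecidableEq α] [Nonempty α]
    {M s D : ℕ} (hM : 1 ≤ M) (hD : 1 ≤ D)
    (I : Fin M → Finset α)
    (hcard : ∀ j, (I j).card = 3)
    (hdeg : ∀ a : α, (Finset.univ.filter fun j => a ∈ I j).card ≤ D)
    (ε δ : ℝ) (hε : 0 < ε) (hδ : 0 < δ)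
    (hs : (s : ℝ) >
      1 / (18 * ε ^ 2) * ((Fintype.card α : ℝ) * D / M) ^ 2 * Real.log (2 / δ)) :
    ((Finset.univ.filter fun x : Fin s → α =>
        |((Fintype.card α : ℝ) / (3 * s)) *
            (∑ i : Fin s, ∑ j : Fin M, if x i ∈ I j then (1 : ℝ) else 0) - M|
          ≥ M * ε).card : ℝ)
      / (Fintype.card α : ℝ) ^ s ≤ δ := by
  set n : ℝ := (Fintype.card α : ℝ)
  have hn : 0 < n := by positivity
  set f : α → ℝ := fun a ↦ ∑ j : Fin M, if a ∈ I j then (1 : ℝ) else 0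
  have hf_mem (a : α) : f a ∈ Set.Icc 0 (D : ℝ) :=
    ⟨by positivity, by simpa only [f, sum_boole] using (Nat.cast_le (α := ℝ)).mpr (hdeg a)⟩
  have hf_sum : ∑ a, f a = 3 * M := by
    rw [sum_comm]
    simp [hcard, mul_comm]
  set t : ℝ := 3 * s * M * ε / n
  have hevent : (univ.filter fun x : Fin s → α ↦ |n / (3 * s) * ∑ i, f (x i) - M| ≥ M * ε) ⊆
      univ.filter fun x ↦ t ≤ |∑ i, (f (x i) - (∑ a, f a) / n)| := by
    intro x hx
    simp only [mem_filter_univ] at hx ⊢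
    rcases Nat.eq_zero_or_pos s with rfl | hs_pos
    · simp [t]
    have hscale : ∑ i, (f (x i) - (∑ a, f a) / n) =
        3 * s / n * (n / (3 * s) * ∑ i, f (x i) - M) := by
      rw [sum_sub_distrib, sum_const, card_univ, Fintype.card_fin, hf_sum, nsmul_eq_mul]
      field_simp
    rw [hscale, abs_mul, abs_of_pos (by positivity)]
    calc t = 3 * s / n * (M * ε) := by ring
      _ ≤ _ := by gcongr
  set C : ℝ := 1 / (18 * ε ^ 2) * (n * D / M) ^ 2
  have hC : 0 < C := by positivity
  have hexponent : -2 * t ^ 2 / (s * ((D : ℝ) - 0) ^ 2) = -(s / C) := by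
    rcases eq_or_ne s 0 with rfl | hs_ne
    · simp [t]
    have hD_pos : (0 : ℝ) < D := by exact_mod_cast hD
    simp only [t, C, sub_zero]
    field_simp
    ring
  calc _ ≤ (#(univ.filter fun x : Fin s → α ↦ t ≤ |∑ i, (f (x i) - (∑ a, f a) / n)|) : ℝ)
        / n ^ s := by gcongr
    _ ≤ 2 * exp (-2 * t ^ 2 / (s * ((D : ℝ) - 0) ^ 2)) :=
        card_filter_abs_sum_sub_ge_le s f hf_mem (by positivity)
    _ ≤ δ := by rw [hexponent]; exact two_mul_exp_neg_div_le hC hδ hs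

/-- **Theorem 4 (concentration bound of MoCHy-A).**
`α` is the finite hyperedge set `E` (with `|E| ≥ 1`), `I 1, …, I M` (`M ≥ 1`)
are pairwise-distinct 3-element subsets of `E`, and every element of `E`
belongs to at most `D ≥ 1` of them.  The `s` i.i.d. uniform samples are
encoded by the uniform distribution on `Fin s → α`, and the probability of the
deviation event is the number of sample vectors realizing it divided by
`|E|^s`.  If `s > (1/(18ε²)) · (|E|·D/M)² · log(2/δ)`, then
`Pr(|M̄ − M| ≥ M·ε) ≤ δ`. -/
theorem mochyA_concentration {α : Type*} [Fintype α] [DecidableEq α] [Nonempty α]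
    {M s D : ℕ} (hM : 1 ≤ M) (hD : 1 ≤ D)
    (I : Fin M → Finset α)
    (hcard : ∀ j, (I j).card = 3) (hdist : Function.Injective I)
    (hdeg : ∀ a : α, (Finset.univ.filter fun j => a ∈ I j).card ≤ D)
    (ε δ : ℝ) (hε : 0 < ε) (hδ : 0 < δ)
    (hs : (s : ℝ) >
      1 / (18 * ε ^ 2) * ((Fintype.card α : ℝ) * D / M) ^ 2 * Real.log (2 / δ)) :
    ((Finset.univ.filter fun x : Fin s → α =>
        |((Fintype.card α : ℝ) / (3 * s)) *
            (∑ i : Fin s, ∑ j : Fin M, if x i ∈ I j then (1 : ℝ) else 0) - M|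
          ≥ M * ε).card : ℝ)
      / (Fintype.card α : ℝ) ^ s ≤ δ :=
  mochyA_concentration_general hM hD I hcard hdeg ε δ hε hδ hs
end

section
/- Let Λ be a finite set with |Λ| ≥ 1 and let J_1, …, J_M be 2-element subsets of Λ such that any two distinct sets J_j, J_{j'} share at most one element (as holds for the hyperwedge sets of distinct open h-motif instances). Let Y_1, …, Y_r (r ≥ 1) be independent uniform random samples from Λ and define M̂ := (|Λ|/(2r)) · Σ_{i=1}^{r} Σ_{j=1}^{M} 1[Y_i ∈ J_j]. For n ∈ {0,1}, let q_n be the number of ordered pairs (j, j') with j ≠ j' and |J_j ∩ J_{j'}| = n. Then Var[M̂] = (1/(2r)) · M · (|Λ| − 2) + (1/(4r)) · Σ_{n=0}^{1} q_n · (n·|Λ| − 4). (Theorem 5, variance of MoCHy-A⁺ for open h-motifs.) -/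
/-! With `S b` the number of sets `J j` containing `b`, the estimator is `|Λ|/(2r)` times a sum
of `r` i.i.d. copies of `S Y`, so its variance is `|Λ|²/(4r)` times the variance of `S Y`: after
centring `S`, all cross terms between distinct samples vanish. Double counting gives
`∑ b, S b = ∑ j, |J j| = 2M` and `∑ b, (S b)² = ∑ j j', |J j ∩ J j'| = 2M + q₁`, while
`q₀ + q₁ = M² - M` because distinct sets share at most one element. -/

open Finset

section UniformSample

variable {ι β : Type*} [Fintype ι] [DecidableEq ι] [Fintype β]

theorem sum_fun_apply [Nonempty β] (g : β → ℝ) (i : ι) :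
    ∑ y : ι → β, g (y i)
      = (∑ b, g b) * Fintype.card β ^ Fintype.card ι / Fintype.card β := by
  have hcard :
      Fintype.card β * Fintype.card ({j // j ≠ i} → β) = Fintype.card β ^ Fintype.card ι :=
    (Fintype.card_prod _ _).symm.trans ((Fintype.card_congr (Equiv.funSplitAt i β)).symm.trans
      Fintype.card_fun)
  rw [← (Equiv.funSplitAt i β).symm.sum_comp, Fintype.sum_prod_type]
  simp only [Equiv.funSplitAt_symm_apply, dite_true, sum_const, card_univ, nsmul_eq_mul]
  rw [← mul_sum, ← Nat.cast_pow, ← hcard]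
  push_cast
  field_simp

theorem sum_fun_apply_mul_apply_eq_zero {g : β → ℝ} (hg : ∑ b, g b = 0) (h : β → ℝ)
    {i k : ι} (hki : k ≠ i) : ∑ y : ι → β, g (y i) * h (y k) = 0 := by
  rw [← (Equiv.funSplitAt i β).symm.sum_comp, Fintype.sum_prod_type]
  simp [hki, ← mul_sum, ← sum_mul, hg]

theorem sum_fun_sq_sum_apply_of_sum_eq_zero [Nonempty β] {g : β → ℝ} (hg : ∑ b, g b = 0) :
    ∑ y : ι → β, (∑ i, g (y i)) ^ 2
      = Fintype.card ι * (∑ b, g b ^ 2) * Fintype.card β ^ Fintype.card ι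
          / Fintype.card β := by
  calc ∑ y : ι → β, (∑ i, g (y i)) ^ 2
      = ∑ i, ∑ k, ∑ y : ι → β, g (y i) * g (y k) := by
        simp_rw [sq, sum_mul_sum]
        rw [sum_comm]
        exact sum_congr rfl fun i _ => sum_comm
    _ = ∑ i : ι, ∑ y : ι → β, g (y i) ^ 2 := by
        refine sum_congr rfl fun i _ => ?_
        rw [sum_eq_single i (fun k _ hki => sum_fun_apply_mul_apply_eq_zero hg g hki)
          (by simp)]
        simp only [sq]
    _ = _ := by
        simp only [sum_fun_apply (fun b => g b ^ 2), sum_const, card_univ, nsmul_eq_mul]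
        ring

theorem sum_fun_sum_apply_div [Nonempty β] (f : β → ℝ) :
    (∑ y : ι → β, ∑ i, f (y i)) / Fintype.card β ^ Fintype.card ι
      = Fintype.card ι * ((∑ b, f b) / Fintype.card β) := by
  rw [sum_comm]
  simp only [sum_fun_apply f, sum_const, card_univ, nsmul_eq_mul]
  field_simp

theorem sum_fun_sq_sum_apply_sub_div [Nonempty β] (f : β → ℝ) :
    (∑ y : ι → β, (∑ i, f (y i) - Fintype.card ι * ((∑ b, f b) / Fintype.card β)) ^ 2)
        / Fintype.card β ^ Fintype.card ι
      = Fintype.card ι * ((∑ b, f b ^ 2) / Fintype.card β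
          - ((∑ b, f b) / Fintype.card β) ^ 2) := by
  set m := (∑ b, f b) / Fintype.card β with hm
  have hcenter : ∑ b, (f b - m) = 0 := by
    rw [sum_sub_distrib, sum_const, card_univ, nsmul_eq_mul, hm]
    field_simp
    ring
  have hshift : ∀ y : ι → β, ∑ i, f (y i) - Fintype.card ι * m = ∑ i, (f (y i) - m) := by
    intro y
    rw [sum_sub_distrib, sum_const, card_univ, nsmul_eq_mul]
  have hsq : ∑ b, (f b - m) ^ 2 = ∑ b, f b ^ 2 - Fintype.card β * m ^ 2 := by
    simp only [sub_sq, sum_add_distrib, sum_sub_distrib, ← sum_mul, ← mul_sum, sum_const,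
      card_univ, nsmul_eq_mul, hm]
    field_simp
    ring
  simp_rw [hshift, sum_fun_sq_sum_apply_of_sum_eq_zero hcenter, hsq]
  field_simp

theorem sum_fun_sq_mul_sum_apply_sub_mean_div [Nonempty β] (c : ℝ) (f : β → ℝ) :
    (∑ y : ι → β, (c * ∑ i, f (y i)
        - (∑ z : ι → β, c * ∑ i, f (z i)) / Fintype.card β ^ Fintype.card ι) ^ 2)
        / Fintype.card β ^ Fintype.card ι
      = c ^ 2 * Fintype.card ι * ((∑ b, f b ^ 2) / Fintype.card β
          - ((∑ b, f b) / Fintype.card β) ^ 2) := by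
  rw [← mul_sum, mul_div_assoc, sum_fun_sum_apply_div]
  simp_rw [← mul_sub, mul_pow, ← mul_sum, mul_div_assoc, sum_fun_sq_sum_apply_sub_div]
  ring

end UniformSample

section SetFamily

variable {κ β : Type*} [Fintype κ] [DecidableEq β]

theorem sum_card_filter_mem [Fintype β] (J : κ → Finset β) :
    ∑ b, #{j | b ∈ J j} = ∑ j, #(J j) := by
  simpa [bipartiteAbove, bipartiteBelow, filter_mem_eq_inter] using
    sum_card_bipartiteAbove_eq_sum_card_bipartiteBelow (s := univ) (t := univ)
      (r := fun b j => b ∈ J j)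

theorem sum_sq_card_filter_mem [Fintype β] (J : κ → Finset β) :
    ∑ b, #{j | b ∈ J j} ^ 2 = ∑ p : κ × κ, #(J p.1 ∩ J p.2) := by
  rw [← sum_card_filter_mem]
  refine sum_congr rfl fun b _ => ?_
  rw [sq, ← card_product, ← filter_product, univ_product_univ]
  simp only [mem_inter]

variable [DecidableEq κ]

/-- `#(interCardPairs J n)` is the paper's `q_n`. -/
def interCardPairs (J : κ → Finset β) (n : ℕ) : Finset (κ × κ) :=
  {p | p.1 ≠ p.2 ∧ #(J p.1 ∩ J p.2) = n}

variable {J : κ → Finset β}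

theorem sum_card_inter_eq_sum_card_add_card_interCardPairs
    (hshare : ∀ j j', j ≠ j' → #(J j ∩ J j') ≤ 1) :
    ∑ p : κ × κ, #(J p.1 ∩ J p.2) = ∑ j, #(J j) + #(interCardPairs J 1) := by
  have hsplit : ∀ p : κ × κ, #(J p.1 ∩ J p.2)
      = (if p.1 = p.2 then #(J p.1) else 0)
        + (if p.1 ≠ p.2 ∧ #(J p.1 ∩ J p.2) = 1 then 1 else 0) := by
    rintro ⟨j, j'⟩
    dsimp only
    by_cases h : j = j'
    · subst h
      simp
    · have := hshare j j' h
      rw [if_neg h, zero_add]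
      split_ifs with h1
      · exact h1.2
      · simp only [ne_eq, h, not_false_eq_true, true_and] at h1
        omega
  rw [sum_congr rfl fun p _ => hsplit p, sum_add_distrib, interCardPairs, card_filter,
    Fintype.sum_prod_type]
  simp

theorem card_interCardPairs_zero_add_one (hshare : ∀ j j', j ≠ j' → #(J j ∩ J j') ≤ 1) :
    #(interCardPairs J 0) + #(interCardPairs J 1) + Fintype.card κ
      = Fintype.card κ * Fintype.card κ := by
  have hunion : interCardPairs J 0 ∪ interCardPairs J 1 = univ.offDiag := by
    ext ⟨j, j'⟩
    simp only [interCardPairs, mem_union, mem_filter, mem_univ, true_and, mem_offDiag]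
    by_cases h : j = j'
    · simp [h]
    · have := hshare j j' h
      simp only [ne_eq, h, not_false_eq_true, true_and, iff_true]
      omega
  have hdisj : Disjoint (interCardPairs J 0) (interCardPairs J 1) :=
    disjoint_filter.2 fun _ _ h0 h1 => by omega
  rw [← card_union_of_disjoint hdisj, hunion, offDiag_card, card_univ]
  have := Nat.le_mul_self (Fintype.card κ)
  omega

end SetFamily

/-- **Theorem 5 (variance of MoCHy-A⁺ for open h-motifs).**
`β` is the finite hyperwedge set `Λ` (with `|Λ| ≥ 1`), `J 1, …, J M` are
2-element subsets of `Λ` such that any two distinct ones share at most one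
element.  `est` is the estimator `M̂ = (|Λ|/(2r)) · Σᵢ Σⱼ 1[Yᵢ ∈ Jⱼ]`, the
`r ≥ 1` i.i.d. uniform samples being encoded by the uniform distribution on
`Fin r → β`; `μ = E[M̂]` and `q n` is the number of ordered pairs `(j, j')`
with `j ≠ j'` and `|Jⱼ ∩ Jⱼ'| = n`.  Then
`Var[M̂] = (1/(2r))·M·(|Λ| − 2) + (1/(4r))·Σ_{n=0}^{1} q_n·(n·|Λ| − 4)`. -/
theorem mochyAplus_variance_open {β : Type*} [Fintype β] [DecidableEq β] [Nonempty β]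
    {M r : ℕ} (hr : 1 ≤ r)
    (J : Fin M → Finset β) (hcard : ∀ j, (J j).card = 2)
    (hshare : ∀ j j' : Fin M, j ≠ j' → (J j ∩ J j').card ≤ 1)
    (est : (Fin r → β) → ℝ)
    (hest : ∀ y, est y = ((Fintype.card β : ℝ) / (2 * r)) *
        ∑ i : Fin r, ∑ j : Fin M, (if y i ∈ J j then (1 : ℝ) else 0))
    (μ : ℝ) (hμ : μ = (∑ y : Fin r → β, est y) / (Fintype.card β : ℝ) ^ r)
    (q : ℕ → ℕ)
    (hq : ∀ n, q n =
      Nat.card {jj : Fin M × Fin M // jj.1 ≠ jj.2 ∧ (J jj.1 ∩ J jj.2).card = n}) :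
    (∑ y : Fin r → β, (est y - μ) ^ 2) / (Fintype.card β : ℝ) ^ r
      = 1 / (2 * r) * M * ((Fintype.card β : ℝ) - 2)
        + 1 / (4 * r) *
            ∑ n ∈ Finset.range 2, (q n : ℝ) * (n * (Fintype.card β : ℝ) - 4) := by
  set S : β → ℝ := fun b => (#{j | b ∈ J j} : ℕ)
  have hvar :=
    sum_fun_sq_mul_sum_apply_sub_mean_div (ι := Fin r) ((Fintype.card β : ℝ) / (2 * r)) S
  rw [Fintype.card_fin] at hvar
  set N : ℝ := (Fintype.card β : ℝ)
  have hestS : est = fun y => N / (2 * r) * ∑ i, S (y i) := funext fun y => by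
    simp [hest, S, sum_boole]
  have hq_card : ∀ n, q n = #(interCardPairs J n) := fun n => by
    rw [hq, Nat.card_eq_fintype_card, Fintype.card_subtype]
    rfl
  have hsum : ∑ b, S b = 2 * M := by
    simp only [S, ← Nat.cast_sum, sum_card_filter_mem, hcard, sum_const, card_univ,
      Fintype.card_fin, smul_eq_mul]
    push_cast
    ring
  have hsumsq : ∑ b, S b ^ 2 = 2 * M + q 1 := by
    simp only [S, ← Nat.cast_pow, ← Nat.cast_sum, sum_sq_card_filter_mem,
      sum_card_inter_eq_sum_card_add_card_interCardPairs hshare, hcard, sum_const, card_univ,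
      Fintype.card_fin, smul_eq_mul, hq_card]
    push_cast
    ring
  have hpairs : (q 0 : ℝ) + q 1 + M = M * M := by
    have := card_interCardPairs_zero_add_one hshare
    rw [Fintype.card_fin, ← hq_card, ← hq_card] at this
    exact_mod_cast this
  have hN : N ≠ 0 := Nat.cast_ne_zero.2 Fintype.card_ne_zero
  have hr0 : (r : ℝ) ≠ 0 := Nat.cast_ne_zero.2 (by omega)
  simp only [hμ, hestS]
  rw [hvar, hsum, hsumsq]
  simp only [sum_range_succ, sum_range_zero]
  field_simp
  push_cast
  linear_combination 16 * hpairs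
end

section
/- Let Λ be a finite set with |Λ| ≥ 1 and let J_1, …, J_M (M ≥ 1) be 3-element subsets of Λ. Suppose every element of Λ belongs to at most D of the sets J_1, …, J_M (D ≥ 1). Let Y_1, …, Y_r be independent uniform samples from Λ and M̂ := (|Λ|/(3r)) · Σ_{i=1}^{r} Σ_{j=1}^{M} 1[Y_i ∈ J_j]. Then for any ε, δ > 0, if r > (1/(18ε²)) · (|Λ|·D/M)² · log(2/δ), then Pr(|M̂ − M| ≥ M·ε) ≤ δ. (Theorem 7, concentration bound of MoCHy-A⁺ for closed h-motifs; the paper instantiates D = d_max[t], the maximum number of adjacent hyperedges over all hyperedges occurring in instances of h-motif t.) -/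
open scoped Classical

/-!
With `c b` the number of sets `J j` containing `b`, `M̂ - M` is `|Λ| / (3r)` times the centred sum
`∑ i, (c (Y i) - 3M / |Λ|)` of `r` independent variables with values in `[0, D]`; the mean is
`3M / |Λ|` because double counting gives `∑ b, c b = 3M`. Hoeffding's inequality bounds
`Pr(|M̂ - M| ≥ M ε)` by `2 exp (-18 r ε² M² / (|Λ| D)²)`, which the assumption on `r` makes at
most `δ`.
-/

open MeasureTheory ProbabilityTheory Finset Real

namespace ProbabilityTheory

variable {β ι : Type*} [Fintype β] [MeasurableSpace β] [MeasurableSingletonClass β] [Fintype ι]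

lemma uniformOn_univ_real_setOf (p : β → Prop) [DecidablePred p] :
    (uniformOn (Set.univ : Set β)).real {x | p x} = #{x | p x} / Fintype.card β := by
  have h := uniformOn_apply_finset (s := (univ : Finset β)) (t := {x | p x})
  simp only [coe_univ, coe_filter, mem_univ, true_and, univ_inter, card_univ] at h
  simp only [measureReal_def, h, ENNReal.toReal_div, ENNReal.toReal_natCast]

lemma integral_uniformOn_univ_s6 (f : β → ℝ) :
    ∫ x, f x ∂uniformOn (Set.univ : Set β) = (∑ x, f x) / Fintype.card β := by
  simp [integral_fintype, uniformOn_univ, measureReal_def, div_eq_inv_mul, mul_sum]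

lemma uniformOn_univ_pi :
    uniformOn (Set.univ : Set (ι → β)) = Measure.pi fun _ ↦ uniformOn (Set.univ : Set β) := by
  rw [← uniformOn_pi, Set.pi_univ]

lemma uniformOn_real_sum_sub_integral_ge_le [Nonempty β] (f : β → ℝ) {a b : ℝ}
    (hf : ∀ x, f x ∈ Set.Icc a b) {t : ℝ} (ht : 0 ≤ t) :
    (uniformOn (Set.univ : Set (ι → β))).real
        {y | t ≤ ∑ i, (f (y i) - ∫ x, f x ∂uniformOn Set.univ)}
      ≤ exp (-2 * t ^ 2 / (Fintype.card ι * (b - a) ^ 2)) := by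
  set g : β → ℝ := fun x ↦ f x - ∫ x, f x ∂uniformOn Set.univ
  have hg : HasSubgaussianMGF g ((‖b - a‖₊ / 2) ^ 2) (uniformOn Set.univ) :=
    hasSubgaussianMGF_of_mem_Icc Measurable.of_discrete.aemeasurable (ae_of_all _ hf)
  have hindep : iIndepFun (fun (i : ι) (y : ι → β) ↦ g (y i))
      (Measure.pi fun _ ↦ uniformOn Set.univ) :=
    iIndepFun_pi fun _ ↦ hg.aemeasurable
  have hsample (i : ι) : HasSubgaussianMGF (fun y : ι → β ↦ g (y i)) ((‖b - a‖₊ / 2) ^ 2)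
      (Measure.pi fun _ ↦ uniformOn Set.univ) :=
    .of_map (measurable_pi_apply i).aemeasurable
      (by rwa [(measurePreserving_eval (fun _ ↦ uniformOn (Set.univ : Set β)) i).map_eq])
  rw [uniformOn_univ_pi]
  have hHoeffding :=
    HasSubgaussianMGF.measure_sum_ge_le_of_iIndepFun (s := univ) hindep (fun i _ ↦ hsample i) ht
  refine hHoeffding.trans_eq ?_
  simp only [sum_const, card_univ, nsmul_eq_mul]
  push_cast
  rw [Real.norm_eq_abs, div_pow, sq_abs,
    show 2 * (Fintype.card ι * ((b - a) ^ 2 / 2 ^ 2)) = Fintype.card ι * (b - a) ^ 2 / 2 by ring,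
    div_div_eq_mul_div]
  congr 1
  ring

lemma uniformOn_real_abs_sum_sub_integral_ge_le [Nonempty β] (f : β → ℝ) {a b : ℝ}
    (hf : ∀ x, f x ∈ Set.Icc a b) {t : ℝ} (ht : 0 ≤ t) :
    (uniformOn (Set.univ : Set (ι → β))).real
        {y | t ≤ |∑ i, (f (y i) - ∫ x, f x ∂uniformOn Set.univ)|}
      ≤ 2 * exp (-2 * t ^ 2 / (Fintype.card ι * (b - a) ^ 2)) := by
  have hneg : ∀ x, (-f) x ∈ Set.Icc (-b) (-a) := fun x ↦ ⟨neg_le_neg (hf x).2, neg_le_neg (hf x).1⟩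
  have hsum_neg (y : ι → β) : ∑ i, ((-f) (y i) - ∫ x, (-f) x ∂uniformOn Set.univ)
      = -∑ i, (f (y i) - ∫ x, f x ∂uniformOn Set.univ) := by
    simp only [Pi.neg_apply, integral_neg, ← sum_neg_distrib, neg_sub_neg, neg_sub]
  calc _ ≤ (uniformOn Set.univ).real
          ({y : ι → β | t ≤ ∑ i, (f (y i) - ∫ x, f x ∂uniformOn Set.univ)} ∪
            {y | t ≤ ∑ i, ((-f) (y i) - ∫ x, (-f) x ∂uniformOn Set.univ)}) := by
        refine measureReal_mono fun y hy ↦ ?_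
        simp only [Set.mem_ofPred_eq, Set.mem_union, hsum_neg] at hy ⊢
        exact le_abs.mp hy
    _ ≤ exp (-2 * t ^ 2 / (Fintype.card ι * (b - a) ^ 2))
          + exp (-2 * t ^ 2 / (Fintype.card ι * (-a - -b) ^ 2)) :=
        (measureReal_union_le _ _).trans <| add_le_add
          (uniformOn_real_sum_sub_integral_ge_le f hf ht)
          (uniformOn_real_sum_sub_integral_ge_le (-f) hneg ht)
    _ = 2 * exp (-2 * t ^ 2 / (Fintype.card ι * (b - a) ^ 2)) := by rw [neg_sub_neg]; ring

end ProbabilityTheory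

lemma card_le_abs_sum_sub_mean_div_card_pow_le {β : Type*} [Fintype β] [Nonempty β]
    (f : β → ℝ) {a b : ℝ} (hf : ∀ x, f x ∈ Set.Icc a b) (r : ℕ) {t : ℝ} (ht : 0 ≤ t) :
    (#{y : Fin r → β | t ≤ |∑ i, f (y i) - r * ((∑ x, f x) / Fintype.card β)|} : ℝ)
        / Fintype.card β ^ r
      ≤ 2 * exp (-2 * t ^ 2 / (r * (b - a) ^ 2)) := by
  let : MeasurableSpace β := ⊤
  have : DiscreteMeasurableSpace β := ⟨fun _ ↦ trivial⟩
  have h := uniformOn_real_abs_sum_sub_integral_ge_le (ι := Fin r) f hf ht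
  simp only [integral_uniformOn_univ_s6, sum_sub_distrib, sum_const, card_univ, Fintype.card_fin,
    nsmul_eq_mul] at h
  rwa [uniformOn_univ_real_setOf, Fintype.card_fun, Fintype.card_fin, Nat.cast_pow] at h

lemma card_filter_div_card_pow_le_one {β : Type*} [Fintype β] {r : ℕ}
    (p : (Fin r → β) → Prop) [DecidablePred p] :
    (#{y | p y} : ℝ) / Fintype.card β ^ r ≤ 1 := by
  refine div_le_one_of_le₀ ?_ (by positivity)
  exact_mod_cast (card_filter_le _ _).trans (by simp)

lemma sum_card_filter_mem_eq_sum_card {β ι : Type*} [Fintype β] [DecidableEq β] [Fintype ι]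
    (J : ι → Finset β) : ∑ b, #{j | b ∈ J j} = ∑ j, #(J j) := by
  simpa [bipartiteAbove, bipartiteBelow] using
    sum_card_bipartiteAbove_eq_sum_card_bipartiteBelow (s := univ) (t := univ)
      (r := fun b j ↦ b ∈ J j)

lemma le_abs_mul_sub_iff_div_le_abs_sub_div {k : ℝ} (hk : 0 < k) (a x m : ℝ) :
    a ≤ |k * x - m| ↔ a / k ≤ |x - m / k| := by
  rw [show k * x - m = k * (x - m / k) by field_simp, abs_mul, abs_of_pos hk, div_le_iff₀' hk]

lemma two_mul_exp_neg_le {x δ : ℝ} (hδ : 0 < δ) (hx : log (2 / δ) ≤ x) : 2 * exp (-x) ≤ δ := by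
  calc 2 * exp (-x) ≤ 2 * exp (-log (2 / δ)) := by gcongr
    _ = δ := by rw [exp_neg, exp_log (by positivity)]; field_simp

/-- **Theorem 7 (concentration bound of MoCHy-A⁺ for closed h-motifs).**
`β` is the finite hyperwedge set `Λ` (with `|Λ| ≥ 1`), `J 1, …, J M` (`M ≥ 1`)
are 3-element subsets of `Λ`, and every element of `Λ` belongs to at most
`D ≥ 1` of them.  The `r` i.i.d. uniform samples are encoded by the uniform
distribution on `Fin r → β`, and the probability of the deviation event is the
number of sample vectors realizing it divided by `|Λ|^r`.  If
`r > (1/(18ε²)) · (|Λ|·D/M)² · log(2/δ)`, then `Pr(|M̂ − M| ≥ M·ε) ≤ δ`. -/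
theorem mochyAplus_concentration_closed {β : Type*} [Fintype β] [DecidableEq β] [Nonempty β]
    {M r D : ℕ} (hM : 1 ≤ M) (hD : 1 ≤ D)
    (J : Fin M → Finset β) (hcard : ∀ j, (J j).card = 3)
    (hdeg : ∀ b : β, (Finset.univ.filter fun j => b ∈ J j).card ≤ D)
    (ε δ : ℝ) (hε : 0 < ε) (hδ : 0 < δ)
    (hr : (r : ℝ) >
      1 / (18 * ε ^ 2) * ((Fintype.card β : ℝ) * D / M) ^ 2 * Real.log (2 / δ)) :
    ((Finset.univ.filter fun y : Fin r → β =>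
        |((Fintype.card β : ℝ) / (3 * r)) *
            (∑ i : Fin r, ∑ j : Fin M, if y i ∈ J j then (1 : ℝ) else 0) - M|
          ≥ M * ε).card : ℝ)
      / (Fintype.card β : ℝ) ^ r ≤ δ := by
  set N : ℝ := (Fintype.card β : ℝ)
  have hN : 0 < N := Nat.cast_pos.mpr Fintype.card_pos
  have hD0 : (0 : ℝ) < D := Nat.cast_pos.mpr hD
  rcases r.eq_zero_or_pos with rfl | hr_pos
  · have hlog : log (2 / δ) < 0 := neg_of_mul_neg_right (by simpa using hr) (by positivity)
    rw [log_neg_iff (by positivity), div_lt_one hδ] at hlog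
    exact (card_filter_div_card_pow_le_one _).trans (by linarith)
  set c : β → ℝ := fun b ↦ #{j | b ∈ J j}
  have hc_mem (b : β) : c b ∈ Set.Icc 0 (D : ℝ) := ⟨by positivity, Nat.cast_le.mpr (hdeg b)⟩
  have hc_sum : ∑ b, c b = 3 * M := by
    simp only [c]
    exact_mod_cast (sum_card_filter_mem_eq_sum_card J).trans (by simp [hcard, mul_comm])
  set t : ℝ := M * ε / (N / (3 * r))
  have hevent : (univ.filter fun y : Fin r → β =>
        |(N / (3 * r)) * (∑ i : Fin r, ∑ j : Fin M, if y i ∈ J j then (1 : ℝ) else 0) - M|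
          ≥ M * ε)
      = (univ.filter fun y : Fin r → β => t ≤ |∑ i, c (y i) - r * ((∑ x, c x) / N)|) := by
    refine filter_congr fun y _ ↦ ?_
    rw [ge_iff_le, le_abs_mul_sub_iff_div_le_abs_sub_div (by positivity), hc_sum,
      show (M : ℝ) / (N / (3 * r)) = r * (3 * M / N) by field_simp]
    simp [c, t]
  have hexp : 2 * exp (-(2 * t ^ 2 / (r * D ^ 2))) ≤ δ := by
    refine two_mul_exp_neg_le hδ ?_
    calc log (2 / δ)
        = 18 * ε ^ 2 * (M / (N * D)) ^ 2 * (1 / (18 * ε ^ 2) * (N * D / M) ^ 2 * log (2 / δ)) := by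
          field_simp
      _ ≤ 18 * ε ^ 2 * (M / (N * D)) ^ 2 * r := by gcongr
      _ = 2 * t ^ 2 / (r * D ^ 2) := by simp only [t]; field_simp; ring
  rw [hevent]
  exact (card_le_abs_sum_sub_mean_div_card_pow_le c hc_mem r (by positivity)).trans
    (by rwa [sub_zero, neg_mul, neg_div])
end

section
/- Let e_1, …, e_m be pairwise-distinct nonempty finite sets (the hyperedges of a hypergraph), and say e_a is adjacent to e_b if a ≠ b and e_a ∩ e_b ≠ ∅. For any indices i < j < k such that the three hyperedges e_i, e_j, e_k are connected (at least one of them is adjacent to the other two), there exists exactly one index a ∈ {i, j, k} such that, writing {b, c} := {i, j, k} ∖ {a}, both e_b and e_c are adjacent to e_a and moreover e_b ∩ e_c = ∅ or a < min(b, c). (Correctness of the counting condition of MoCHy-E: each h-motif instance is counted exactly once.) -/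
/-!
Since `i` is the smallest index, `i` is counted exactly when `e i` meets both `e j` and `e k`.
The later indices `j` and `k` can only be counted through disjointness of the opposite pair,
which for `j` means `e i ∩ e k = ∅` and for `k` means `e i ∩ e j = ∅`; each of these rules out
the other two centers. So the three candidate centers are mutually exclusive, and
connectedness says that one of them is counted.
-/

theorem existsUnique_eq_of_exactlyOne {α : Type*} {i j k : α}
    (hij : i ≠ j) (hik : i ≠ k) (hjk : j ≠ k) {P Q R : Prop} (h : P ∨ Q ∨ R)
    (hPQ : ¬(P ∧ Q)) (hPR : ¬(P ∧ R)) (hQR : ¬(Q ∧ R)) :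
    ∃! a, (a = i ∧ P) ∨ (a = j ∧ Q) ∨ (a = k ∧ R) := by
  rcases h with hP | hQ | hR
  · refine ⟨i, .inl ⟨rfl, hP⟩, ?_⟩
    rintro a (⟨rfl, -⟩ | ⟨-, hQ⟩ | ⟨-, hR⟩)
    exacts [rfl, (hPQ ⟨hP, hQ⟩).elim, (hPR ⟨hP, hR⟩).elim]
  · refine ⟨j, .inr (.inl ⟨rfl, hQ⟩), ?_⟩
    rintro a (⟨-, hP⟩ | ⟨rfl, -⟩ | ⟨-, hR⟩)
    exacts [(hPQ ⟨hP, hQ⟩).elim, rfl, (hQR ⟨hQ, hR⟩).elim]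
  · refine ⟨k, .inr (.inr ⟨rfl, hR⟩), ?_⟩
    rintro a (⟨-, hP⟩ | ⟨-, hQ⟩ | ⟨rfl, -⟩)
    exacts [(hPR ⟨hP, hR⟩).elim, (hQR ⟨hQ, hR⟩).elim, rfl]

theorem mochyE_counted_once_general {V : Type*} [DecidableEq V] {m : ℕ}
    (e : Fin m → Finset V)
    (i j k : Fin m) (hij : i < j) (hjk : j < k)
    (hconn :
      ((e i ∩ e j).Nonempty ∧ (e i ∩ e k).Nonempty) ∨
      ((e j ∩ e i).Nonempty ∧ (e j ∩ e k).Nonempty) ∨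
      ((e k ∩ e i).Nonempty ∧ (e k ∩ e j).Nonempty)) :
    ∃! a : Fin m,
      (a = i ∧ (e i ∩ e j).Nonempty ∧ (e i ∩ e k).Nonempty ∧
        (e j ∩ e k = ∅ ∨ (i < j ∧ i < k))) ∨
      (a = j ∧ (e j ∩ e i).Nonempty ∧ (e j ∩ e k).Nonempty ∧
        (e i ∩ e k = ∅ ∨ (j < i ∧ j < k))) ∨
      (a = k ∧ (e k ∩ e i).Nonempty ∧ (e k ∩ e j).Nonempty ∧
        (e i ∩ e j = ∅ ∨ (k < i ∧ k < j))) := by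
  have hik : i < k := hij.trans hjk
  simp only [Finset.inter_comm (e j) (e i), Finset.inter_comm (e k) (e i),
    Finset.inter_comm (e k) (e j), ← Finset.not_nonempty_iff_eq_empty, hij, hik,
    not_lt_of_gt hij, not_lt_of_gt hik, not_lt_of_gt hjk, and_self, and_true,
    or_true, or_false] at hconn ⊢
  apply existsUnique_eq_of_exactlyOne hij.ne hik.ne hjk.ne <;> tauto

/-- **Correctness of the counting condition of MoCHy-E (Algorithm 2).**
The hyperedges are pairwise-distinct nonempty finite sets `e 1, …, e m`;
`e a` is adjacent to `e b` iff `a ≠ b` and `e a ∩ e b ≠ ∅`.  For indices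
`i < j < k` whose hyperedges are connected (at least one of them is adjacent
to the other two), there is exactly one index `a ∈ {i, j, k}` such that,
with `{b, c} = {i, j, k} ∖ {a}`, both `e b` and `e c` are adjacent to `e a`
and moreover `e b ∩ e c = ∅` or `a < min (b, c)`. -/
theorem mochyE_counted_once {V : Type*} [DecidableEq V] {m : ℕ}
    (e : Fin m → Finset V) (hdist : Function.Injective e)
    (hne : ∀ a, (e a).Nonempty)
    (i j k : Fin m) (hij : i < j) (hjk : j < k)
    (hconn :
      ((e i ∩ e j).Nonempty ∧ (e i ∩ e k).Nonempty) ∨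
      ((e j ∩ e i).Nonempty ∧ (e j ∩ e k).Nonempty) ∨
      ((e k ∩ e i).Nonempty ∧ (e k ∩ e j).Nonempty)) :
    ∃! a : Fin m,
      (a = i ∧ (e i ∩ e j).Nonempty ∧ (e i ∩ e k).Nonempty ∧
        (e j ∩ e k = ∅ ∨ (i < j ∧ i < k))) ∨
      (a = j ∧ (e j ∩ e i).Nonempty ∧ (e j ∩ e k).Nonempty ∧
        (e i ∩ e k = ∅ ∨ (j < i ∧ j < k))) ∨
      (a = k ∧ (e k ∩ e i).Nonempty ∧ (e k ∩ e j).Nonempty ∧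
        (e i ∩ e j = ∅ ∨ (k < i ∧ k < j))) :=
  mochyE_counted_once_general e i j k hij hjk hconn
end

section
/- Let R be the set of the 7 nonempty subsets of {0,1,2} and let k ≥ 2 be an integer. Call a function p : R → {0,1,…,k−1} a valid pattern if: (distinctness) for every pair i ≠ j in {0,1,2} there exists S ∈ R with p(S) ≠ 0 and exactly one of i, j belonging to S; and (connectedness) the graph on {0,1,2} in which i and j (i ≠ j) are joined iff there exists S ∈ R with {i,j} ⊆ S and p(S) ≠ 0, is connected. The symmetric group S_3 acts on patterns by permuting {0,1,2} (and correspondingly the subsets in R). Then the number X(k) of orbits of valid patterns under this action equals k(k−1)(k⁵ + k⁴ + 4k³ + k² − 4k + 2)/6. In particular X(2) = 26, X(3) = 431, X(4) = 3076, X(5) = 14190, and X(6) = 49750. (Equation (17), the number of kh-motifs.) -/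
/-- A region: a nonempty subset of `{0,1,2}`; there are 7 of them. -/
abbrev Region3 : Type := {S : Finset (Fin 3) // S.Nonempty}

/-- The graph on `{0,1,2}` in which `i ≠ j` are joined iff some region `S`
with `p S ≠ 0` contains both `i` and `j`. -/
def patternGraphK {k : ℕ} (p : Region3 → Fin k) : SimpleGraph (Fin 3) where
  Adj i j := i ≠ j ∧ ∃ S : Region3, (p S).val ≠ 0 ∧ i ∈ S.1 ∧ j ∈ S.1
  symm := by
    constructor
    rintro i j ⟨hij, S, hS, hi, hj⟩
    exact ⟨hij.symm, S, hS, hj, hi⟩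
  loopless := by
    constructor
    rintro i ⟨h, -⟩
    exact h rfl

/-- A `k`-ary pattern `p : R → {0,…,k−1}` is valid if it satisfies
distinctness (every pair `i ≠ j` is separated by some region `S` with
`p S ≠ 0` containing exactly one of `i, j`) and connectedness (the associated
graph on `{0,1,2}` is connected). -/
def ValidPatternK {k : ℕ} (p : Region3 → Fin k) : Prop :=
  (∀ i j : Fin 3, i ≠ j →
    ∃ S : Region3, (p S).val ≠ 0 ∧ ((i ∈ S.1 ∧ j ∉ S.1) ∨ (i ∉ S.1 ∧ j ∈ S.1))) ∧
  (patternGraphK p).Connected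

/-- The `S₃`-symmetry relation on valid `k`-ary patterns. -/
def PatternRelK {k : ℕ} (p q : {f : Region3 → Fin k // ValidPatternK f}) : Prop :=
  ∃ σ : Equiv.Perm (Fin 3), ∀ S : Region3,
    q.1 ⟨S.1.image σ, S.2.image σ⟩ = p.1 S

/-- `X k`: the number of `k`h-motifs, i.e., the number of orbits of valid
`k`-ary patterns under the action of `S₃`. -/
noncomputable def numKhMotifs (k : ℕ) : ℕ :=
  Nat.card (Quot (PatternRelK (k := k)))

/-!
Burnside's lemma gives `6 X(k) = ∑_{σ ∈ S₃} |Fix σ|`. Validity of a pattern depends only on its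
support, the set of regions with nonzero value. A pattern fixed by `σ` is a function on the
`⟨σ⟩`-orbits of regions, and such functions with a prescribed support `B` (a set of orbits) number
`m ^ |B|` where `m = k - 1`. Counting the valid supports by size is a finite check, giving
`|Fix 1| = 3m² + 22m³ + 32m⁴ + 21m⁵ + 7m⁶ + m⁷`, `m + 5m² + 8m³ + 5m⁴ + m⁵` for each transposition
and `m + 3m² + m³` for each 3-cycle.
-/

namespace SimpleGraph

variable {V : Type*} {G : SimpleGraph V}

theorem connected_iff_forall_exists_adj [Fintype V] [Nontrivial V] (hV : Fintype.card V ≤ 3) :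
    G.Connected ↔ ∀ v, ∃ w, G.Adj v w := by
  classical
  refine ⟨fun h => h.preconnected.exists_adj_of_nontrivial, fun h => ?_⟩
  refine (connected_iff G).mpr ⟨fun u v => ?_, inferInstance⟩
  obtain ⟨a, hua⟩ := h u
  obtain ⟨b, hvb⟩ := h v
  by_cases huv : u = v
  · exact huv ▸ Reachable.refl u
  by_cases hav : a = v
  · exact hav ▸ hua.reachable
  by_cases hbu : b = u
  · exact hbu ▸ hvb.reachable.symm
  by_cases hab : a = b
  · exact hua.reachable.trans (hab ▸ hvb.symm.reachable)
  -- otherwise `u, v, a, b` would be four distinct vertices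
  have := Finset.card_le_univ ({u, v, a, b} : Finset V)
  rw [Finset.card_insert_of_notMem, Finset.card_insert_of_notMem, Finset.card_pair hab] at this
  · omega
  · simp [Ne.symm hav, hvb.ne]
  · simp [huv, hua.ne, Ne.symm hbu]

end SimpleGraph

namespace MulAction

section Group

variable {G X : Type*} [Group G] [MulAction G X]

theorem card_fixedBy_conj (σ τ : G) :
    Nat.card (fixedBy X (τ * σ * τ⁻¹)) = Nat.card (fixedBy X σ) := by
  rw [← smul_fixedBy, Set.natCard_smul_set]

theorem card_orbits_mul_card_eq_sum_card_fixedBy [Fintype G] [Finite X] :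
    Nat.card (orbitRel.Quotient G X) * Fintype.card G = ∑ g : G, Nat.card (fixedBy X g) := by
  classical
  have := Fintype.ofFinite X
  simp only [Nat.card_eq_fintype_card]
  exact (sum_card_fixedBy_eq_card_orbits_mul_card_group G X).symm

end Group

section Monoid

variable {M α β γ : Type*} [Monoid M] [MulAction M α] {σ : M}

theorem apply_pow_smul_eq {p : α → γ} (hp : ∀ a, p (σ • a) = p a) (n : ℕ) (a : α) :
    p (σ ^ n • a) = p a := by
  induction n generalizing a with
  | zero => rw [pow_zero, one_smul]
  | succ n ih => rw [pow_succ, mul_smul, ih, hp]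

def invariantFunEquiv {g : α → β} {e : β → α} (hg : ∀ a, g (σ • a) = g a)
    (hge : ∀ b, g (e b) = b) (heg : ∀ a, ∃ n : ℕ, σ ^ n • a = e (g a)) :
    {p : α → γ // ∀ a, p (σ • a) = p a} ≃ (β → γ) where
  toFun p := p.1 ∘ e
  invFun q := ⟨q ∘ g, fun a => congrArg q (hg a)⟩
  left_inv p := Subtype.ext <| funext fun a => by
    obtain ⟨n, hn⟩ := heg a
    change p.1 (e (g a)) = p.1 a
    rw [← hn, apply_pow_smul_eq p.2]
  right_inv q := funext fun b => congrArg q (hge b)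

end Monoid

end MulAction

namespace KhMotif

open Finset Equiv MulAction

def support {α : Type*} [Fintype α] {k : ℕ} (p : α → Fin k) : Finset α := {a | (p a).val ≠ 0}

theorem support_comp {α β : Type*} [Fintype α] [Fintype β] [DecidableEq β] {k : ℕ}
    (q : β → Fin k) (g : α → β) : support (q ∘ g) = ({a | g a ∈ support q} : Finset α) := by
  ext a
  simp [support]

theorem card_support_eq_pow {β : Type*} [Fintype β] [DecidableEq β] (m : ℕ) (B : Finset β) :
    #{q : β → Fin (m + 1) | support q = B} = m ^ #B := by
  have hfactor : ∀ b, Fintype.card {x : Fin (m + 1) // x.val ≠ 0 ↔ b ∈ B} =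
      if b ∈ B then m else 1 := by
    intro b
    split_ifs with hb <;> simp [hb, Fin.val_eq_zero_iff, Fintype.card_subtype_compl]
  have hpi : {q : β → Fin (m + 1) // support q = B} ≃
      ∀ b, {x : Fin (m + 1) // x.val ≠ 0 ↔ b ∈ B} :=
    (Equiv.subtypeEquivRight fun q => by simp [Finset.ext_iff, support]).trans
      Equiv.subtypePiEquivPi
  rw [← Fintype.card_subtype, Fintype.card_congr hpi,
    Fintype.card_pi, Finset.prod_congr rfl fun b _ => hfactor b, Fintype.prod_ite_mem,
    prod_const]

theorem card_pred_support_eq_sum {β : Type*} [Fintype β] [DecidableEq β] (m : ℕ)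
    (P : Finset β → Prop) [DecidablePred P] :
    Nat.card {q : β → Fin (m + 1) // P (support q)} = ∑ B with P B, m ^ #B := by
  rw [Nat.card_eq_fintype_card, Fintype.card_subtype,
    card_eq_sum_card_fiberwise (f := support) (t := {B | P B}) fun q hq => by simpa using hq]
  refine sum_congr rfl fun B hB => ?_
  rw [filter_filter, ← card_support_eq_pow m B]
  congr 1
  ext q
  simp only [mem_filter, mem_univ, true_and, and_iff_right_iff_imp]
  rintro rfl
  simpa using hB

theorem sum_pow_card_eq_of_card_filter {t : ℕ} (s : Finset (Finset (Fin t)))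
    (c : Fin (t + 1) → ℕ) (hc : ∀ j : Fin (t + 1), #{B ∈ s | #B = j} = c j) (m : ℕ) :
    ∑ B ∈ s, m ^ #B = ∑ j, c j * m ^ (j : ℕ) := by
  let size (B : Finset (Fin t)) : Fin (t + 1) :=
    ⟨#B, Nat.lt_succ_of_le ((card_le_univ B).trans_eq (Fintype.card_fin t))⟩
  rw [← sum_fiberwise s size]
  refine sum_congr rfl fun j _ => ?_
  have hsize : ∀ B, size B = j ↔ #B = j := fun B => Fin.ext_iff
  simp only [hsize]
  rw [sum_congr rfl fun B hB => by rw [(mem_filter.mp hB).2], sum_const, hc, smul_eq_mul]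

instance : MulAction (Perm (Fin 3)) Region3 where
  smul σ S := ⟨S.1.image σ, S.2.image σ⟩
  one_smul S := Subtype.ext <| by
    change S.1.image (1 : Perm (Fin 3)) = S.1
    simp
  mul_smul σ τ S := Subtype.ext <| by
    change S.1.image (σ * τ) = (S.1.image τ).image σ
    simp [image_image]

theorem mem_smul_region {σ : Perm (Fin 3)} {S : Region3} {i : Fin 3} :
    i ∈ (σ • S).1 ↔ σ⁻¹ i ∈ S.1 := by
  change i ∈ S.1.image σ ↔ _
  rw [mem_image, Perm.inv_def]
  exact ⟨fun ⟨a, ha, h⟩ => by rwa [← h, symm_apply_apply], fun h => ⟨_, h, apply_symm_apply σ i⟩⟩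

/-- Connectedness appears as the absence of isolated vertices, which is equivalent on three
vertices (`SimpleGraph.connected_iff_forall_exists_adj`). -/
def ValidSupport (A : Finset Region3) : Prop :=
  (∀ i j : Fin 3, i ≠ j → ∃ S ∈ A, (i ∈ S.1 ∧ j ∉ S.1) ∨ (i ∉ S.1 ∧ j ∈ S.1)) ∧
  ∀ i : Fin 3, ∃ j, i ≠ j ∧ ∃ S ∈ A, i ∈ S.1 ∧ j ∈ S.1

instance : DecidablePred ValidSupport := fun A => by unfold ValidSupport; infer_instance

theorem validPatternK_iff {k : ℕ} (p : Region3 → Fin k) :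
    ValidPatternK p ↔ ValidSupport (support p) := by
  unfold ValidPatternK ValidSupport
  rw [SimpleGraph.connected_iff_forall_exists_adj (by simp)]
  simp [patternGraphK, support]

theorem ValidSupport.filter_smul_mem (σ : Perm (Fin 3)) {A : Finset Region3}
    (hA : ValidSupport A) : ValidSupport {S | σ • S ∈ A} := by
  obtain ⟨hsep, hconn⟩ := hA
  refine ⟨fun i j hij => ?_, fun i => ?_⟩
  · obtain ⟨S, hS, hiS⟩ := hsep (σ i) (σ j) (σ.injective.ne hij)
    exact ⟨σ⁻¹ • S, by simpa using hS, by simpa [mem_smul_region] using hiS⟩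
  · obtain ⟨j, hij, S, hS, hiS, hjS⟩ := hconn (σ i)
    refine ⟨σ⁻¹ j, fun h => hij (by simp [h]), σ⁻¹ • S, by simpa using hS, ?_⟩
    simpa [mem_smul_region] using ⟨hiS, hjS⟩

theorem ValidPatternK.comp_smul {k : ℕ} (σ : Perm (Fin 3)) {p : Region3 → Fin k}
    (hp : ValidPatternK p) : ValidPatternK (fun S => p (σ • S)) := by
  rw [validPatternK_iff] at hp ⊢
  convert hp.filter_smul_mem σ using 1
  ext S
  simp [support]

abbrev ValidPattern (k : ℕ) : Type := {p : Region3 → Fin k // ValidPatternK p}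

instance (k : ℕ) : MulAction (Perm (Fin 3)) (ValidPattern k) where
  smul σ p := ⟨fun S => p.1 (σ⁻¹ • S), ValidPatternK.comp_smul σ⁻¹ p.2⟩
  one_smul p := Subtype.ext <| funext fun S => congrArg p.1 (one_smul _ S)
  mul_smul σ τ p := Subtype.ext <| funext fun S => by
    change p.1 ((σ * τ)⁻¹ • S) = p.1 (τ⁻¹ • σ⁻¹ • S)
    rw [mul_inv_rev, mul_smul]

theorem smul_val_apply {k : ℕ} (σ : Perm (Fin 3)) (p : ValidPattern k) (S : Region3) :
    (σ • p).1 S = p.1 (σ⁻¹ • S) := rfl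

theorem patternRelK_iff {k : ℕ} (p q : ValidPattern k) :
    PatternRelK p q ↔ ∃ σ : Perm (Fin 3), σ • q = p := by
  refine ⟨fun ⟨σ, h⟩ => ⟨σ⁻¹, Subtype.ext (funext fun S => ?_)⟩, fun ⟨σ, h⟩ => ⟨σ⁻¹, fun S => ?_⟩⟩
  · rw [smul_val_apply, inv_inv]
    exact h S
  · rw [← h]
    rfl

theorem numKhMotifs_eq_card_orbits (k : ℕ) :
    numKhMotifs k = Nat.card (orbitRel.Quotient (Perm (Fin 3)) (ValidPattern k)) :=
  Nat.card_congr <| Quot.congrRight fun p q =>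
    (patternRelK_iff p q).trans (orbitRel_apply.trans mem_orbit_iff).symm

theorem smul_eq_self_iff {k : ℕ} (σ : Perm (Fin 3)) (p : ValidPattern k) :
    σ • p = p ↔ ∀ S, p.1 (σ • S) = p.1 S := by
  simp only [Subtype.ext_iff, funext_iff, smul_val_apply]
  exact ⟨fun h S => by simpa using (h (σ • S)).symm, fun h S => by simpa using (h (σ⁻¹ • S)).symm⟩

theorem card_fixedBy_eq_sum {t m : ℕ} {σ : Perm (Fin 3)} {g : Region3 → Fin t}
    {e : Fin t → Region3} (hg : ∀ S, g (σ • S) = g S) (hge : ∀ b, g (e b) = b)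
    (heg : ∀ S, ∃ n < 3, σ ^ n • S = e (g S)) :
    Nat.card (fixedBy (ValidPattern (m + 1)) σ) =
      ∑ B with ValidSupport {S | g S ∈ B}, m ^ #B := by
  let invariant (p : Region3 → Fin (m + 1)) : Prop := ∀ S, p (σ • S) = p S
  let orbitFun := invariantFunEquiv (γ := Fin (m + 1)) hg hge fun S => (heg S).imp fun _ h => h.2
  calc Nat.card (fixedBy (ValidPattern (m + 1)) σ)
      = Nat.card {p : ValidPattern (m + 1) // ∀ S, p.1 (σ • S) = p.1 S} :=
        Nat.card_congr (Equiv.subtypeEquivRight (smul_eq_self_iff σ))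
    _ = Nat.card {p : {p : Region3 → Fin (m + 1) // ∀ S, p (σ • S) = p S} // ValidPatternK p.1} :=
        Nat.card_congr <| (subtypeSubtypeEquivSubtypeInter ValidPatternK invariant).trans <|
          (Equiv.subtypeEquivRight fun _ => and_comm).trans
          (subtypeSubtypeEquivSubtypeInter invariant ValidPatternK).symm
    _ = Nat.card {q : Fin t → Fin (m + 1) // ValidPatternK (q ∘ g)} :=
        Nat.card_congr (Equiv.subtypeEquiv orbitFun.symm fun _ => Iff.rfl).symm
    _ = Nat.card {q : Fin t → Fin (m + 1) // ValidSupport {S | g S ∈ support q}} :=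
        Nat.card_congr (Equiv.subtypeEquivRight fun q => by rw [validPatternK_iff, support_comp])
    _ = ∑ B with ValidSupport {S | g S ∈ B}, m ^ #B :=
        card_pred_support_eq_sum m fun B => ValidSupport {S | g S ∈ B}

def regionOf : Fin 7 → Region3 :=
  ![⟨{0}, by decide⟩, ⟨{1}, by decide⟩, ⟨{2}, by decide⟩, ⟨{0, 1}, by decide⟩,
    ⟨{0, 2}, by decide⟩, ⟨{1, 2}, by decide⟩, ⟨{0, 1, 2}, by decide⟩]

theorem regionOf_bijective : Function.Bijective regionOf := by decide

def regionIndex : Region3 → Fin 7 := Fintype.bijInv regionOf_bijective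

theorem card_fixedBy_one (m : ℕ) :
    Nat.card (fixedBy (ValidPattern (m + 1)) (1 : Perm (Fin 3))) =
      3 * m ^ 2 + 22 * m ^ 3 + 32 * m ^ 4 + 21 * m ^ 5 + 7 * m ^ 6 + m ^ 7 := by
  rw [card_fixedBy_eq_sum (g := regionIndex) (e := regionOf) (by decide) (by decide) (by decide),
    sum_pow_card_eq_of_card_filter _ ![0, 0, 3, 22, 32, 21, 7, 1] (by decide)]
  simp [Fin.sum_univ_succ]
  ring

-- The orbits of `swap 0 1` on the regions are {0},{1} | {2} | {0,1} | {0,2},{1,2} | {0,1,2};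
-- `g` numbers them and `e` picks a representative of each.
theorem card_fixedBy_swap (m : ℕ) :
    Nat.card (fixedBy (ValidPattern (m + 1)) (swap (0 : Fin 3) 1)) =
      m + 5 * m ^ 2 + 8 * m ^ 3 + 5 * m ^ 4 + m ^ 5 := by
  rw [card_fixedBy_eq_sum (g := ![0, 0, 1, 2, 3, 3, 4] ∘ regionIndex)
      (e := regionOf ∘ ![0, 2, 3, 4, 6]) (by decide) (by decide) (by decide),
    sum_pow_card_eq_of_card_filter _ ![0, 1, 5, 8, 5, 1] (by decide)]
  simp [Fin.sum_univ_succ]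
  ring

-- The orbits of a 3-cycle on the regions are the regions of a given size.
theorem card_fixedBy_finRotate (m : ℕ) :
    Nat.card (fixedBy (ValidPattern (m + 1)) (finRotate 3)) = m + 3 * m ^ 2 + m ^ 3 := by
  rw [card_fixedBy_eq_sum (g := ![0, 0, 0, 1, 1, 1, 2] ∘ regionIndex)
      (e := regionOf ∘ ![0, 3, 6]) (by decide) (by decide) (by decide),
    sum_pow_card_eq_of_card_filter _ ![0, 1, 3, 1] (by decide)]
  simp [Fin.sum_univ_succ]
  ring

theorem sum_perm_fin_three {M : Type*} [AddCommMonoid M] (F : Perm (Fin 3) → M)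
    (hF : ∀ σ τ, F (τ * σ * τ⁻¹) = F σ) :
    ∑ σ, F σ = F 1 + 3 • F (swap 0 1) + 2 • F (finRotate 3) := by
  have huniv : (univ : Finset (Perm (Fin 3))) =
      {1, swap 0 1, swap 0 2, swap 1 2, finRotate 3, (finRotate 3)⁻¹} := by decide
  have h02 : F (swap 0 2) = F (swap 0 1) := by
    rw [show swap (0 : Fin 3) 2 = swap 1 2 * swap 0 1 * (swap 1 2)⁻¹ by decide, hF]
  have h12 : F (swap 1 2) = F (swap 0 1) := by
    rw [show swap (1 : Fin 3) 2 = swap 0 2 * swap 0 1 * (swap 0 2)⁻¹ by decide, hF]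
  have hinv : F (finRotate 3)⁻¹ = F (finRotate 3) := by
    rw [show (finRotate 3)⁻¹ = swap 0 1 * finRotate 3 * (swap 0 1)⁻¹ by decide, hF]
  rw [huniv, sum_insert (by decide), sum_insert (by decide), sum_insert (by decide),
    sum_insert (by decide), sum_insert (by decide), sum_singleton, h02, h12, hinv]
  abel

theorem numKhMotifs_succ_mul_six (m : ℕ) :
    numKhMotifs (m + 1) * 6 =
      (3 * m ^ 2 + 22 * m ^ 3 + 32 * m ^ 4 + 21 * m ^ 5 + 7 * m ^ 6 + m ^ 7) +
      3 * (m + 5 * m ^ 2 + 8 * m ^ 3 + 5 * m ^ 4 + m ^ 5) + 2 * (m + 3 * m ^ 2 + m ^ 3) := by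
  have burnside := card_orbits_mul_card_eq_sum_card_fixedBy (G := Perm (Fin 3))
    (X := ValidPattern (m + 1))
  rw [sum_perm_fin_three _ card_fixedBy_conj, card_fixedBy_one, card_fixedBy_swap,
    card_fixedBy_finRotate, show Fintype.card (Perm (Fin 3)) = 6 by decide] at burnside
  rw [numKhMotifs_eq_card_orbits, burnside, smul_eq_mul, smul_eq_mul]

end KhMotif

/-- **Equation (17): the number of kh-motifs.**
For every `k ≥ 2`, `X(k) = k(k−1)(k⁵ + k⁴ + 4k³ + k² − 4k + 2)/6`; in
particular `X(2) = 26`, `X(3) = 431`, `X(4) = 3076`, `X(5) = 14190`, and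
`X(6) = 49750`. -/
theorem num_kh_motifs :
    (∀ k : ℕ, 2 ≤ k →
      (numKhMotifs k : ℚ) =
        (k : ℚ) * ((k : ℚ) - 1) *
          ((k : ℚ) ^ 5 + (k : ℚ) ^ 4 + 4 * (k : ℚ) ^ 3 + (k : ℚ) ^ 2
            - 4 * (k : ℚ) + 2) / 6)
    ∧ numKhMotifs 2 = 26 ∧ numKhMotifs 3 = 431 ∧ numKhMotifs 4 = 3076
    ∧ numKhMotifs 5 = 14190 ∧ numKhMotifs 6 = 49750 := by
  refine ⟨fun k hk => ?_, ?_, ?_, ?_, ?_, ?_⟩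
  · obtain ⟨m, rfl⟩ : ∃ m, k = m + 1 := ⟨k - 1, by omega⟩
    have h := congrArg (Nat.cast : ℕ → ℚ) (KhMotif.numKhMotifs_succ_mul_six m)
    push_cast at h ⊢
    linear_combination h / 6
  all_goals
    exact Nat.eq_of_mul_eq_mul_right (by norm_num : 0 < 6)
      ((KhMotif.numKhMotifs_succ_mul_six _).trans (by norm_num))
end

section
/- Let R be the set of the 7 nonempty subsets of {0,1,2}. A function p : R → Bool satisfies (distinctness) for every pair i ≠ j in {0,1,2} there exists S ∈ R with p(S) = true and exactly one of i, j belonging to S, and (connectedness) the graph on {0,1,2} in which i and j (i ≠ j) are joined iff there exists S ∈ R with {i,j} ⊆ S and p(S) = true is connected, IF AND ONLY IF there exist pairwise-distinct nonempty finite sets e_0, e_1, e_2 that are connected (at least one of them intersects both of the others) such that for every S ∈ R, p(S) = true ⟺ ⋂_{i∈S} e_i ∖ ⋃_{i∉S} e_i ≠ ∅. (Exhaustivity and realizability of h-motifs: the overlapping pattern of any three connected distinct hyperedges is a valid pattern, and every valid pattern is realized by some three connected distinct hyperedges.) -/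
/-- The graph on `{0,1,2}` in which `i ≠ j` are joined iff some region `S`
with `p S = true` contains both `i` and `j`. -/
def patternGraph3 (p : Region3 → Bool) : SimpleGraph (Fin 3) where
  Adj i j := i ≠ j ∧ ∃ S : Region3, p S = true ∧ i ∈ S.1 ∧ j ∈ S.1
  symm := by
    constructor
    rintro i j ⟨hij, S, hS, hi, hj⟩
    exact ⟨hij.symm, S, hS, hj, hi⟩
  loopless := by
    constructor
    rintro i ⟨h, -⟩
    exact h rfl

/-- A pattern `p : R → Bool` is valid if it satisfies distinctness (every pair
`i ≠ j` is separated by some region `S` with `p S = true` containing exactly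
one of `i, j`) and connectedness (the associated graph on `{0,1,2}` is
connected). -/
def ValidPattern3 (p : Region3 → Bool) : Prop :=
  (∀ i j : Fin 3, i ≠ j →
    ∃ S : Region3, p S = true ∧ ((i ∈ S.1 ∧ j ∉ S.1) ∨ (i ∉ S.1 ∧ j ∈ S.1))) ∧
  (patternGraph3 p).Connected

/-- The region of three hyperedges `e 0, e 1, e 2` (finite sets of nodes)
associated with a nonempty `S ⊆ {0,1,2}`:
`⋂_{i ∈ S} e i ∖ ⋃_{i ∉ S} e i`. -/
def regionOf (e : Fin 3 → Finset ℕ) (S : Region3) : Finset ℕ :=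
  S.1.inf' S.2 e \ S.1ᶜ.sup e

theorem mem_regionOf_iff {e : Fin 3 → Finset ℕ} {S : Region3} {n : ℕ} :
    n ∈ regionOf e S ↔ ∀ k, k ∈ S.1 ↔ n ∈ e k := by
  simp only [regionOf, Finset.mem_sdiff, Finset.mem_inf', Finset.mem_sup, Finset.mem_compl]
  grind

theorem exists_mem_regionOf {e : Fin 3 → Finset ℕ} {n : ℕ} {i : Fin 3} (hn : n ∈ e i) :
    ∃ T : Region3, n ∈ regionOf e T :=
  ⟨⟨Finset.univ.filter (n ∈ e ·), ⟨i, by simpa using hn⟩⟩, mem_regionOf_iff.2 (by simp)⟩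

namespace SimpleGraph

theorem connected_of_forall_adj {V : Type*} {G : SimpleGraph V} {x : V}
    (h : ∀ y, y ≠ x → G.Adj x y) : G.Connected := by
  refine (connected_iff_exists_forall_reachable G).2 ⟨x, fun y => ?_⟩
  obtain rfl | hy := eq_or_ne y x
  · rfl
  · exact (h y hy).reachable

theorem connected_fin_three_iff {G : SimpleGraph (Fin 3)} :
    G.Connected ↔ (G.Adj 0 1 ∧ G.Adj 0 2) ∨ (G.Adj 1 0 ∧ G.Adj 1 2) ∨ (G.Adj 2 0 ∧ G.Adj 2 1) := by
  constructor
  · intro h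
    obtain ⟨a, ha⟩ := h.preconnected.exists_adj_of_nontrivial 0
    obtain ⟨b, hb⟩ := h.preconnected.exists_adj_of_nontrivial 1
    obtain ⟨c, hc⟩ := h.preconnected.exists_adj_of_nontrivial 2
    fin_cases a <;> fin_cases b <;> fin_cases c <;> grind [adj_comm, SimpleGraph.irrefl]
  · rintro (⟨h01, h02⟩ | ⟨h10, h12⟩ | ⟨h20, h21⟩)
    · exact connected_of_forall_adj (x := 0) fun y hy => by fin_cases y <;> simp_all
    · exact connected_of_forall_adj (x := 1) fun y hy => by fin_cases y <;> simp_all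
    · exact connected_of_forall_adj (x := 2) fun y hy => by fin_cases y <;> simp_all

end SimpleGraph

section IntersectionGraph

variable {ι α : Type*} [DecidableEq α]

def intersectionGraph (e : ι → Finset α) : SimpleGraph ι where
  Adj i j := i ≠ j ∧ (e i ∩ e j).Nonempty
  symm := ⟨fun i j h => ⟨h.1.symm, Finset.inter_comm (e i) (e j) ▸ h.2⟩⟩
  loopless := ⟨fun _ h => h.1 rfl⟩

@[simp]
theorem intersectionGraph_adj {e : ι → Finset α} {i j : ι} :
    (intersectionGraph e).Adj i j ↔ i ≠ j ∧ (e i ∩ e j).Nonempty :=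
  Iff.rfl

theorem nonempty_of_preconnected_intersectionGraph [Nontrivial ι] {e : ι → Finset α}
    (h : (intersectionGraph e).Preconnected) (i : ι) : (e i).Nonempty :=
  let ⟨_, _, hij⟩ := h.exists_adj_of_nontrivial i
  hij.mono Finset.inter_subset_left

end IntersectionGraph

def Realizes (e : Fin 3 → Finset ℕ) (p : Region3 → Bool) : Prop :=
  ∀ S, p S = true ↔ (regionOf e S).Nonempty

namespace Realizes

variable {e : Fin 3 → Finset ℕ} {p : Region3 → Bool}

theorem exists_region_of_mem (h : Realizes e p) {n : ℕ} {i : Fin 3} (hn : n ∈ e i) :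
    ∃ T : Region3, p T = true ∧ ∀ k, k ∈ T.1 ↔ n ∈ e k :=
  let ⟨T, hT⟩ := exists_mem_regionOf hn
  ⟨T, (h T).2 ⟨n, hT⟩, mem_regionOf_iff.1 hT⟩

theorem patternGraph3_eq (h : Realizes e p) : patternGraph3 p = intersectionGraph e := by
  ext i j
  change _ ∧ _ ↔ _ ∧ _
  refine and_congr_right fun _ => ⟨?_, ?_⟩
  · rintro ⟨S, hS, hi, hj⟩
    obtain ⟨n, hn⟩ := (h S).1 hS
    exact ⟨n, Finset.mem_inter.2 ⟨(mem_regionOf_iff.1 hn i).1 hi, (mem_regionOf_iff.1 hn j).1 hj⟩⟩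
  · rintro ⟨n, hn⟩
    obtain ⟨hni, hnj⟩ := Finset.mem_inter.1 hn
    obtain ⟨T, hT, hmem⟩ := h.exists_region_of_mem hni
    exact ⟨T, hT, (hmem i).2 hni, (hmem j).2 hnj⟩

theorem exists_separating_iff (h : Realizes e p) (i j : Fin 3) :
    (∃ S : Region3, p S = true ∧ ((i ∈ S.1 ∧ j ∉ S.1) ∨ (i ∉ S.1 ∧ j ∈ S.1))) ↔ e i ≠ e j := by
  constructor
  · rintro ⟨S, hS, hsep⟩ hij
    obtain ⟨n, hn⟩ := (h S).1 hS
    have hmem := mem_regionOf_iff.1 hn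
    rw [hmem i, hmem j, hij] at hsep
    tauto
  · intro hij
    obtain ⟨n, hn⟩ : ∃ n, ¬(n ∈ e i ↔ n ∈ e j) := by
      by_contra! hsame
      exact hij (Finset.ext hsame)
    obtain ⟨T, hT, hmem⟩ : ∃ T : Region3, p T = true ∧ ∀ k, k ∈ T.1 ↔ n ∈ e k := by
      by_cases hni : n ∈ e i
      · exact h.exists_region_of_mem hni
      · exact h.exists_region_of_mem ((not_iff.1 hn).1 hni)
    exact ⟨T, hT, by rw [hmem i, hmem j]; tauto⟩

theorem validPattern3_iff (h : Realizes e p) :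
    ValidPattern3 p ↔ Function.Injective e ∧ (intersectionGraph e).Connected := by
  simp only [ValidPattern3, h.exists_separating_iff, h.patternGraph3_eq,
    Function.injective_iff_pairwise_ne, Pairwise, Function.onFun]

end Realizes

def canonicalEdges (p : Region3 → Bool) (i : Fin 3) : Finset ℕ :=
  (Finset.univ.filter fun S : Region3 => p S = true ∧ i ∈ S.1).image Encodable.encode

theorem mem_canonicalEdges {p : Region3 → Bool} {i : Fin 3} {n : ℕ} :
    n ∈ canonicalEdges p i ↔ ∃ T : Region3, (p T = true ∧ i ∈ T.1) ∧ Encodable.encode T = n := by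
  simp [canonicalEdges]

theorem encode_mem_canonicalEdges {p : Region3 → Bool} {i : Fin 3} {T : Region3} :
    Encodable.encode T ∈ canonicalEdges p i ↔ p T = true ∧ i ∈ T.1 := by
  simp only [mem_canonicalEdges, Encodable.encode_inj, exists_eq_right]

theorem realizes_canonicalEdges (p : Region3 → Bool) : Realizes (canonicalEdges p) p := by
  intro S
  refine ⟨fun hS => ⟨Encodable.encode S, mem_regionOf_iff.2 fun k => ?_⟩, ?_⟩
  · simp [encode_mem_canonicalEdges, hS]
  · rintro ⟨n, hn⟩
    obtain ⟨i, hi⟩ := S.2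
    obtain ⟨T, ⟨hT, -⟩, rfl⟩ := mem_canonicalEdges.1 ((mem_regionOf_iff.1 hn i).1 hi)
    have hTS : T = S := Subtype.ext <| Finset.ext fun k => by
      rw [mem_regionOf_iff.1 hn k, encode_mem_canonicalEdges, and_iff_right hT]
    exact hTS ▸ hT

/-- **Exhaustivity and realizability of h-motifs.**
A pattern `p : R → Bool` satisfies distinctness and connectedness if and only
if there exist pairwise-distinct nonempty finite sets `e 0, e 1, e 2` that are
connected (at least one of them intersects both of the others) such that for
every region `S`, `p S = true ↔ ⋂_{i ∈ S} e i ∖ ⋃_{i ∉ S} e i ≠ ∅`. -/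
theorem h_motif_realizability (p : Region3 → Bool) :
    ValidPattern3 p ↔
      ∃ e : Fin 3 → Finset ℕ,
        Function.Injective e ∧ (∀ i, (e i).Nonempty) ∧
        (((e 0 ∩ e 1).Nonempty ∧ (e 0 ∩ e 2).Nonempty) ∨
         ((e 1 ∩ e 0).Nonempty ∧ (e 1 ∩ e 2).Nonempty) ∨
         ((e 2 ∩ e 0).Nonempty ∧ (e 2 ∩ e 1).Nonempty)) ∧
        ∀ S : Region3, (p S = true ↔ (regionOf e S).Nonempty) := by
  constructor
  · intro hp
    have he := realizes_canonicalEdges p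
    obtain ⟨hinj, hconn⟩ := he.validPattern3_iff.1 hp
    refine ⟨canonicalEdges p, hinj, nonempty_of_preconnected_intersectionGraph hconn.preconnected,
      ?_, he⟩
    simpa using SimpleGraph.connected_fin_three_iff.1 hconn
  · rintro ⟨e, hinj, -, hcenter, he⟩
    exact (Realizes.validPattern3_iff he).2
      ⟨hinj, SimpleGraph.connected_fin_three_iff.2 (by simpa using hcenter)⟩
end
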